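/- Let n ≥ 1, l > 0 and β₁, β₂ ∈ ℝ. For an n×n symmetric real matrix x with zero diagonal, let T(x) = (β₁/n²) Σ_{i,j} x_{ij} + (β₂/n³) Σ_{i=1}^n (Σ_{j=1}^n x_{ij})², and let x^l be the entrywise truncation (x^l)_{ij} = min(max(x_{ij}, −l), l). Then |T(x) − T(x^l)| ≤ (|β₂|/n²) Σ_{i,j=1}^n (x_{ij} − x^l_{ij})² + ((2l|β₂| + |β₁|)/n²) Σ_{i,j=1}^n |x_{ij} − x^l_{ij}|. -/
import Mathlib


open MeasureTheory Filter Set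
open scoped ENNReal Topology

noncomputable section

/-- The normalized edge–two-star statistic
`T(x) = (β₁/n²) Σ_{i,j} x_{ij} + (β₂/n³) Σ_i (Σ_j x_{ij})²`. -/
def Tmat (n : ℕ) (β₁ β₂ : ℝ) (m : Fin n → Fin n → ℝ) : ℝ :=
  (β₁ / (n : ℝ) ^ 2) * (∑ i, ∑ j, m i j) + (β₂ / (n : ℝ) ^ 3) * ∑ i, (∑ j, m i j) ^ 2

/-- Truncation `f_l` at level `l`. -/
def trunc (l q : ℝ) : ℝ := min (max q (-l)) l

lemma abs_trunc_le (l q : ℝ) (hl : 0 < l) : |trunc l q| ≤ l := by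
  rw [abs_le]
  constructor
  · exact le_min (le_max_right _ _) (by linarith)
  · exact min_le_right _ _

/-- **Lemma (truncation bound for the edge–two-star statistic).**
For an `n×n` symmetric matrix `x` with zero diagonal and entrywise truncation `x^l`,
`|T(x) − T(x^l)| ≤ (|β₂|/n²) Σ_{i,j} (x_{ij} − x^l_{ij})²
+ ((2l|β₂| + |β₁|)/n²) Σ_{i,j} |x_{ij} − x^l_{ij}|`. -/
theorem two_star_truncation_bound
    (n : ℕ) (hn : 1 ≤ n) (l : ℝ) (hl : 0 < l) (β₁ β₂ : ℝ)
    (m : Fin n → Fin n → ℝ)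
    (hsym : ∀ i j, m i j = m j i) (hdiag : ∀ i, m i i = 0) :
    |Tmat n β₁ β₂ m - Tmat n β₁ β₂ (fun i j => trunc l (m i j))|
      ≤ (|β₂| / (n : ℝ) ^ 2) * ∑ i, ∑ j, (m i j - trunc l (m i j)) ^ 2
        + ((2 * l * |β₂| + |β₁|) / (n : ℝ) ^ 2) * ∑ i, ∑ j, |m i j - trunc l (m i j)| := by
  have hn0 : (0 : ℝ) < (n : ℝ) := by exact_mod_cast hn.trans_lt' (by norm_num)
  set d : Fin n → Fin n → ℝ := fun i j => m i j - trunc l (m i j) with hd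
  set t : Fin n → Fin n → ℝ := fun i j => trunc l (m i j) with ht
  -- decompose the difference
  have hdiff : Tmat n β₁ β₂ m - Tmat n β₁ β₂ t
      = (β₁ / (n : ℝ) ^ 2) * (∑ i, ∑ j, d i j)
        + (β₂ / (n : ℝ) ^ 3) * ∑ i, ((∑ j, d i j) ^ 2 + 2 * (∑ j, d i j) * (∑ j, t i j)) := by
    simp only [Tmat, hd, ht, Finset.sum_sub_distrib]
    have h2 : ∑ i, (((∑ j, m i j) - ∑ j, trunc l (m i j)) ^ 2
        + 2 * ((∑ j, m i j) - ∑ j, trunc l (m i j)) * (∑ j, trunc l (m i j)))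
        = (∑ i, (∑ j, m i j) ^ 2) - ∑ i, (∑ j, trunc l (m i j)) ^ 2 := by
      rw [← Finset.sum_sub_distrib]
      apply Finset.sum_congr rfl
      intro i _; ring
    rw [h2]; ring
  rw [hdiff]
  have hS1 : |∑ i, ∑ j, d i j| ≤ ∑ i, ∑ j, |d i j| := by
    refine (Finset.abs_sum_le_sum_abs _ _).trans ?_
    exact Finset.sum_le_sum fun i _ => Finset.abs_sum_le_sum_abs _ _
  have hS2 : |∑ i, ((∑ j, d i j) ^ 2 + 2 * (∑ j, d i j) * (∑ j, t i j))|
      ≤ (n : ℝ) * (∑ i, ∑ j, d i j ^ 2) + 2 * ((n : ℝ) * l) * (∑ i, ∑ j, |d i j|) := by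
    refine (Finset.abs_sum_le_sum_abs _ _).trans ?_
    rw [Finset.mul_sum, Finset.mul_sum, ← Finset.sum_add_distrib]
    apply Finset.sum_le_sum
    intro i _
    refine (abs_add_le _ _).trans (add_le_add ?_ ?_)
    · rw [abs_of_nonneg (sq_nonneg _)]
      have := sq_sum_le_card_mul_sum_sq (s := Finset.univ) (f := fun j => d i j)
      simpa using this
    · rw [abs_mul, abs_mul, abs_two]
      have h1 : |∑ j, d i j| ≤ ∑ j, |d i j| := Finset.abs_sum_le_sum_abs _ _
      have h2 : |∑ j, t i j| ≤ (n : ℝ) * l := by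
        refine (Finset.abs_sum_le_sum_abs _ _).trans ?_
        calc ∑ j, |t i j| ≤ ∑ j : Fin n, l :=
              Finset.sum_le_sum fun j _ => abs_trunc_le l (m i j) hl
          _ = (n : ℝ) * l := by simp [mul_comm]
      have hnn : (0:ℝ) ≤ ∑ j, |d i j| := Finset.sum_nonneg fun j _ => abs_nonneg _
      calc 2 * |∑ j, d i j| * |∑ j, t i j| ≤ 2 * (∑ j, |d i j|) * ((n:ℝ) * l) := by
            apply mul_le_mul (by linarith) h2 (abs_nonneg _) (by positivity)
        _ = 2 * ((n:ℝ) * l) * ∑ j, |d i j| := by ring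
  have habs2 : ∀ i j, d i j ^ 2 = (m i j - trunc l (m i j)) ^ 2 := fun i j => rfl
  have key : |(β₁ / (n : ℝ) ^ 2) * (∑ i, ∑ j, d i j)
        + (β₂ / (n : ℝ) ^ 3) * ∑ i, ((∑ j, d i j) ^ 2 + 2 * (∑ j, d i j) * (∑ j, t i j))|
      ≤ (|β₁| / (n : ℝ) ^ 2) * (∑ i, ∑ j, |d i j|)
        + (|β₂| / (n : ℝ) ^ 3) * ((n : ℝ) * (∑ i, ∑ j, d i j ^ 2)
            + 2 * ((n : ℝ) * l) * (∑ i, ∑ j, |d i j|)) := by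
    refine (abs_add_le _ _).trans (add_le_add ?_ ?_)
    · rw [abs_mul, abs_div, abs_of_nonneg (by positivity : (0:ℝ) ≤ (n:ℝ)^2)]
      exact mul_le_mul_of_nonneg_left hS1 (by positivity)
    · rw [abs_mul, abs_div, abs_of_nonneg (by positivity : (0:ℝ) ≤ (n:ℝ)^3)]
      exact mul_le_mul_of_nonneg_left hS2 (by positivity)
  refine key.trans (le_of_eq ?_)
  have hne : ((n:ℝ)^3) ≠ 0 := by positivity
  field_simp
  ring
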